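/- Fix: positive integers K and L; a nonempty finite collection I of nonempty subsets of {1,...,K}; for each S ∈ I a positive integer n_S; reals 0 < D_1 < D_2 < ... < D_L; for each k ∈ {1,...,K} an integer r_k ∈ {1,...,L}; positive reals B, T, n₀; a nonempty finite set Ω with q : Ω → ℝ satisfying q(ω) ≥ 0 for all ω and Σ_{ω∈Ω} q(ω) = 1; and for each ω ∈ Ω and k ∈ {1,...,K} a positive real h_k(ω). Let φ(t,u) := t·log₂(1 + u/t) for t > 0 and φ(0,u) := 0. Let C be the set of real families (t,e) = ((t_{ω,S,l}),(e_{ω,S,l})) with t_{ω,S,l} ≥ 0, Σ_{S∈I} Σ_{l=1}^L t_{ω,S,l} ≤ T for every ω, and e_{ω,S,l} ≥ 0; let g_{S,k}(t,e) := n_S·D_{r_k} − (B/T) Σ_{ω∈Ω} q(ω)·φ(t_{ω,S,r_k}, e_{ω,S,r_k}·h_k(ω)/n₀) for S ∈ I, k ∈ S; let Ẽ(t,e) := Σ_{ω∈Ω} q(ω) Σ_{S∈I} Σ_{l=1}^L e_{ω,S,l}; and for λ = (λ_{S,k})_{S∈I,k∈S} with λ_{S,k} ≥ 0 define the dual function D(λ)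 := inf_{(t,e)∈C} [ Ẽ(t,e) + Σ_{S∈I} Σ_{k∈S} λ_{S,k}·g_{S,k}(t,e) ]. Assume there exists (t⁰,e⁰) ∈ C with g_{S,k}(t⁰,e⁰) < 0 for all S ∈ I and k ∈ S (Slater's condition). Then sup{ D(λ) : λ_{S,k} ≥ 0 for all S ∈ I, k ∈ S } = inf{ Ẽ(t,e) : (t,e) ∈ C, g_{S,k}(t,e) ≤ 0 for all S ∈ I, k ∈ S }; i.e., the duality gap of the partial dual problem is zero. -/

import Mathlib

/-!
The problem is convex: the feasible allocations form a convex set, the energy is linear, and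
each constraint `g S k` is an affine term minus a nonnegative combination of the function
`φ(t, u) = t log₂ (1 + u / t)`, the perspective of the concave increasing map `x ↦ log₂ (1 + x)`,
hence concave. For a convex program with finitely many constraints and optimal value `p`, the
point `(0, p)` lies outside the open convex set of strictly dominated values
`{(u, v) | ∃ x, g x < u, f x < v}`. A separating functional has nonpositive coefficients, since
that set is upward closed, and Slater's point forces its energy coefficient to be nonzero;
normalising it gives multipliers `λ ≥ 0` with `p ≤ f x + ∑ λ g x` on the whole domain. Hence
some dual value reaches `p`, and weak duality gives the rest.
-/

open Finset Filter Topology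

lemma Finset.forall_mem_sigma_iff {κ : Type*} {α : κ → Type*} {I : Finset κ}
    {t : ∀ a, Finset (α a)} {P : (Σ a, α a) → Prop} :
    (∀ p ∈ I.sigma t, P p) ↔ ∀ a ∈ I, ∀ b ∈ t a, P ⟨a, b⟩ :=
  ⟨fun h a ha b hb => h ⟨a, b⟩ (mem_sigma.2 ⟨ha, hb⟩),
    fun h p hp => h p.1 (mem_sigma.1 hp).1 p.2 (mem_sigma.1 hp).2⟩

lemma nonpos_of_forall_nonneg_add_mul_lt {x y z : ℝ} (h : ∀ M : ℝ, 0 ≤ M → x + M * y < z) :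
    y ≤ 0 := by
  by_contra! hy
  have hM := h ((z - x) / y) (div_nonneg (by linarith [h 0 le_rfl]) hy.le)
  rw [div_mul_cancel₀ _ hy.ne'] at hM
  linarith

lemma le_of_forall_pos_add_mul_lt {x y z : ℝ} (h : ∀ ε : ℝ, 0 < ε → x + ε * y < z) : x ≤ z := by
  have hlim : Tendsto (fun ε => x + ε * y) (𝓝[>] (0 : ℝ)) (𝓝 x) :=
    tendsto_nhdsWithin_of_tendsto_nhds
      ((by fun_prop : Continuous fun ε => x + ε * y).tendsto' 0 x (by simp))
  exact le_of_tendsto hlim (eventually_nhdsWithin_of_forall fun ε hε => (h ε hε).le)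

lemma mul_add_mul_lt_mul_add_mul_of_lt {a b p q p' q' : ℝ} (hp : p < p') (hq : q < q')
    (ha : 0 ≤ a) (hb : 0 ≤ b) (hab : a + b = 1) : a * p + b * q < a * p' + b * q' := by
  have := convex_Iio (0 : ℝ) (sub_neg.2 hp) (sub_neg.2 hq) ha hb hab
  simp only [smul_eq_mul, Set.mem_Iio] at this
  linarith

lemma LinearMap.map_nonpos_of_isUpperSet {F : Type*} [AddCommGroup F] [PartialOrder F]
    [IsOrderedAddMonoid F] [Module ℝ F] [PosSMulMono ℝ F] (ℓ : F →ₗ[ℝ] ℝ) {A : Set F}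
    (hA : IsUpperSet A) {a : F} (ha : a ∈ A) {t : ℝ} (hℓ : ∀ z ∈ A, ℓ z < t) {d : F}
    (hd : 0 ≤ d) : ℓ d ≤ 0 :=
  nonpos_of_forall_nonneg_add_mul_lt fun M hM => by
    simpa using hℓ _ (hA (le_add_of_nonneg_right (smul_nonneg hM hd)) ha)

lemma StrongDual.apply_prod_eq_sum {ι : Type*} [Fintype ι] [DecidableEq ι]
    (ℓ : StrongDual ℝ ((ι → ℝ) × ℝ)) (u : ι → ℝ) (v : ℝ) :
    ℓ (u, v) = ∑ i, u i * ℓ (Pi.single i 1, 0) + v * ℓ (0, 1) := by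
  have : (u, v) = ∑ i, u i • ((Pi.single i 1, 0) : (ι → ℝ) × ℝ) + v • (0, 1) := by
    ext <;> simp [Prod.fst_sum, Prod.snd_sum, Finset.sum_apply, Pi.single_apply]
  rw [this, map_add, map_sum]
  simp only [map_smul, smul_eq_mul]

section LagrangeMultipliers

variable {E ι : Type*} {C : Set E} {f : E → ℝ} {g : ι → E → ℝ}

def strictValueSet (C : Set E) (f : E → ℝ) (g : ι → E → ℝ) : Set ((ι → ℝ) × ℝ) :=
  {z | ∃ x ∈ C, (∀ i, g i x < z.1 i) ∧ f x < z.2}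

lemma isOpen_strictValueSet [Finite ι] : IsOpen (strictValueSet C f g) := by
  have : strictValueSet C f g = ⋃ x ∈ C, (⋂ i, {z | g i x < z.1 i}) ∩ {z | f x < z.2} := by
    ext z
    simp [strictValueSet, and_left_comm]
  rw [this]
  refine isOpen_biUnion fun x _ => (isOpen_iInter_of_finite fun i => ?_).inter ?_
  · exact isOpen_lt continuous_const ((continuous_apply i).comp continuous_fst)
  · exact isOpen_lt continuous_const continuous_snd

lemma isUpperSet_strictValueSet : IsUpperSet (strictValueSet C f g) := by
  rintro z w hzw ⟨x, hx, hgx, hfx⟩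
  exact ⟨x, hx, fun i => (hgx i).trans_le (hzw.1 i), hfx.trans_le hzw.2⟩

lemma notMem_strictValueSet {p : ℝ} (hp : ∀ x ∈ C, (∀ i, g i x ≤ 0) → p ≤ f x) :
    (0, p) ∉ strictValueSet C f g := by
  rintro ⟨x, hx, hgx, hfx⟩
  exact (hp x hx fun i => (hgx i).le).not_gt hfx

variable [AddCommGroup E] [Module ℝ E]

lemma convex_strictValueSet (hC : Convex ℝ C) (hf : ConvexOn ℝ C f)
    (hg : ∀ i, ConvexOn ℝ C (g i)) : Convex ℝ (strictValueSet C f g) := by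
  rintro z ⟨x, hx, hgx, hfx⟩ w ⟨y, hy, hgy, hfy⟩ a b ha hb hab
  refine ⟨a • x + b • y, hC hx hy ha hb hab, fun i => ?_, ?_⟩
  · exact ((hg i).2 hx hy ha hb hab).trans_lt
      (mul_add_mul_lt_mul_add_mul_of_lt (hgx i) (hgy i) ha hb hab)
  · exact (hf.2 hx hy ha hb hab).trans_lt (mul_add_mul_lt_mul_add_mul_of_lt hfx hfy ha hb hab)

theorem exists_lagrangeMultipliers_of_slater [Fintype ι] (hC : Convex ℝ C)
    (hf : ConvexOn ℝ C f) (hg : ∀ i, ConvexOn ℝ C (g i)) {x₀ : E} (hx₀ : x₀ ∈ C)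
    (hslater : ∀ i, g i x₀ < 0) {p : ℝ} (hp : ∀ x ∈ C, (∀ i, g i x ≤ 0) → p ≤ f x) :
    ∃ lam : ι → ℝ, (∀ i, 0 ≤ lam i) ∧ ∀ x ∈ C, p ≤ f x + ∑ i, lam i * g i x := by
  classical
  obtain ⟨ℓ, hℓ⟩ := geometric_hahn_banach_open_point (convex_strictValueSet hC hf hg)
    isOpen_strictValueSet (notMem_strictValueSet hp)
  have hz₀ : ((0, f x₀ + 1) : (ι → ℝ) × ℝ) ∈ strictValueSet C f g :=
    ⟨x₀, hx₀, hslater, lt_add_one _⟩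
  set c : ι → ℝ := fun i => ℓ (Pi.single i 1, 0)
  set μ := ℓ (0, 1)
  have hℓc : ∀ u v, ℓ (u, v) = ∑ i, u i * c i + v * μ := ℓ.apply_prod_eq_sum
  have hnonpos : ∀ d, 0 ≤ d → ℓ d ≤ 0 := fun d hd =>
    (ℓ : _ →ₗ[ℝ] ℝ).map_nonpos_of_isUpperSet isUpperSet_strictValueSet hz₀ hℓ hd
  have hc : ∀ i, c i ≤ 0 := fun i => hnonpos _ ⟨Pi.single_nonneg.2 zero_le_one, le_rfl⟩
  have hsep : ∀ x ∈ C, ∑ i, g i x * c i + f x * μ ≤ p * μ := by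
    intro x hx
    have h := le_of_forall_pos_add_mul_lt (x := ℓ (fun i => g i x, f x)) (y := ℓ 1)
      (z := ℓ (0, p)) fun ε hε => by
        simpa using hℓ ((fun i => g i x, f x) + ε • 1)
          ⟨x, hx, fun i => by simpa using hε, by simpa using hε⟩
    simpa [hℓc] using h
  have hμ : μ < 0 := by
    refine (hnonpos (0, 1) ⟨le_rfl, zero_le_one⟩).lt_of_ne fun hμ => ?_
    change μ = 0 at hμ
    -- at Slater's point `hsep` then bounds a sum of nonnegative terms by `0`, killing every `c i`
    have hterms : ∀ i ∈ univ, 0 ≤ g i x₀ * c i := fun i _ =>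
      mul_nonneg_of_nonpos_of_nonpos (hslater i).le (hc i)
    have hsum := hsep x₀ hx₀
    rw [hμ, mul_zero, mul_zero, add_zero] at hsum
    have hc0 : ∀ i, c i = 0 := fun i =>
      (mul_eq_zero.1 ((sum_eq_zero_iff_of_nonneg hterms).1 (hsum.antisymm (sum_nonneg hterms)) i
        (mem_univ i))).resolve_left (hslater i).ne
    simpa [hℓc, hc0, hμ] using hℓ _ hz₀
  refine ⟨fun i => c i / μ, fun i => div_nonneg_of_nonpos (hc i) hμ.le, fun x hx => ?_⟩
  have hsum : ∑ i, c i / μ * g i x = (∑ i, g i x * c i) / μ := by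
    rw [sum_div]
    exact sum_congr rfl fun i _ => by ring
  rw [hsum, ← sub_le_iff_le_add', le_div_iff_of_neg hμ]
  linarith [hsep x hx]

theorem exists_lagrangeMultipliers_of_slater_finset (s : Finset ι) (hC : Convex ℝ C)
    (hf : ConvexOn ℝ C f) (hg : ∀ i ∈ s, ConvexOn ℝ C (g i)) {x₀ : E} (hx₀ : x₀ ∈ C)
    (hslater : ∀ i ∈ s, g i x₀ < 0) {p : ℝ}
    (hp : ∀ x ∈ C, (∀ i ∈ s, g i x ≤ 0) → p ≤ f x) :
    ∃ lam : ι → ℝ, (∀ i ∈ s, 0 ≤ lam i) ∧ ∀ x ∈ C, p ≤ f x + ∑ i ∈ s, lam i * g i x := by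
  classical
  obtain ⟨lam, hlam, hL⟩ := exists_lagrangeMultipliers_of_slater (g := fun i : s => g i) hC hf
    (fun i => hg i i.2) hx₀ (fun i => hslater i i.2)
    fun x hx hfeas => hp x hx fun i hi => hfeas ⟨i, hi⟩
  refine ⟨fun i => if hi : i ∈ s then lam ⟨i, hi⟩ else 0, fun i hi => by simpa [hi] using hlam _,
    fun x hx => ?_⟩
  rw [← sum_coe_sort s]
  simpa using hL x hx

theorem sSup_lagrangeDual_eq_sInf_primal (s : Finset ι) (hC : Convex ℝ C)
    (hf : ConvexOn ℝ C f) (hg : ∀ i ∈ s, ConvexOn ℝ C (g i)) (hf₀ : ∀ x ∈ C, 0 ≤ f x)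
    (hslater : ∃ x₀ ∈ C, ∀ i ∈ s, g i x₀ < 0) :
    sSup {d | ∃ lam : ι → ℝ, (∀ i ∈ s, 0 ≤ lam i) ∧
        d = sInf ((fun x => f x + ∑ i ∈ s, lam i * g i x) '' C)} =
      sInf {v | ∃ x ∈ C, (∀ i ∈ s, g i x ≤ 0) ∧ v = f x} := by
  set P := {v | ∃ x ∈ C, (∀ i ∈ s, g i x ≤ 0) ∧ v = f x}
  obtain ⟨x₀, hx₀, hslater⟩ := hslater
  have hP : P.Nonempty := ⟨f x₀, x₀, hx₀, fun i hi => (hslater i hi).le, rfl⟩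
  have hP₀ : ∀ v ∈ P, 0 ≤ v := by
    rintro _ ⟨x, hx, -, rfl⟩
    exact hf₀ x hx
  have weak : ∀ lam : ι → ℝ, (∀ i ∈ s, 0 ≤ lam i) →
      sInf ((fun x => f x + ∑ i ∈ s, lam i * g i x) '' C) ≤ sInf P := by
    intro lam hlam
    by_cases hbdd : BddBelow ((fun x => f x + ∑ i ∈ s, lam i * g i x) '' C)
    · refine le_csInf hP ?_
      rintro _ ⟨x, hx, hfeas, rfl⟩
      refine (csInf_le hbdd ⟨x, hx, rfl⟩).trans (add_le_of_nonpos_right ?_)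
      exact sum_nonpos fun i hi => mul_nonpos_of_nonneg_of_nonpos (hlam i hi) (hfeas i hi)
    -- `sInf` of a set of reals unbounded below is `0`, still below the nonnegative primal value
    · rw [Real.sInf_of_not_bddBelow hbdd]
      exact le_csInf hP hP₀
  obtain ⟨lam, hlam, hL⟩ := exists_lagrangeMultipliers_of_slater_finset s hC hf hg hx₀ hslater
    fun x hx hfeas => csInf_le ⟨0, hP₀⟩ ⟨x, hx, hfeas, rfl⟩
  have strong : sInf P ≤ sInf ((fun x => f x + ∑ i ∈ s, lam i * g i x) '' C) :=
    le_csInf ⟨_, x₀, hx₀, rfl⟩ (by rintro _ ⟨x, hx, rfl⟩; exact hL x hx)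
  refine IsGreatest.csSup_eq ⟨⟨lam, hlam, strong.antisymm (weak lam hlam)⟩, ?_⟩
  rintro _ ⟨lam', hlam', rfl⟩
  exact weak lam' hlam'

theorem sSup_lagrangeDual_eq_sInf_primal_sigma {κ : Type*} {α : κ → Type*} (I : Finset κ)
    (t : ∀ a, Finset (α a)) {g : ∀ a, α a → E → ℝ} (hC : Convex ℝ C) (hf : ConvexOn ℝ C f)
    (hg : ∀ a ∈ I, ∀ b ∈ t a, ConvexOn ℝ C (g a b)) (hf₀ : ∀ x ∈ C, 0 ≤ f x)
    (hslater : ∃ x₀ ∈ C, ∀ a ∈ I, ∀ b ∈ t a, g a b x₀ < 0) :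
    sSup {d | ∃ lam : ∀ a, α a → ℝ, (∀ a ∈ I, ∀ b ∈ t a, 0 ≤ lam a b) ∧
        d = sInf ((fun x => f x + ∑ a ∈ I, ∑ b ∈ t a, lam a b * g a b x) '' C)} =
      sInf {v | ∃ x ∈ C, (∀ a ∈ I, ∀ b ∈ t a, g a b x ≤ 0) ∧ v = f x} := by
  have h := sSup_lagrangeDual_eq_sInf_primal (I.sigma t) (g := fun p => g p.1 p.2) hC hf
    (forall_mem_sigma_iff.2 hg) hf₀ (by simpa only [forall_mem_sigma_iff] using hslater)
  simp only [forall_mem_sigma_iff, sum_sigma] at h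
  rw [← h]
  congr 1
  ext d
  exact ⟨fun ⟨lam, hlam, hd⟩ => ⟨fun p => lam p.1 p.2, hlam, hd⟩,
    fun ⟨lam, hlam, hd⟩ => ⟨fun a b => lam ⟨a, b⟩, hlam, hd⟩⟩

end LagrangeMultipliers

theorem ConcaveOn.sum {𝕜 E β ι : Type*} [Semiring 𝕜] [PartialOrder 𝕜] [AddCommMonoid E]
    [AddCommMonoid β] [PartialOrder β] [IsOrderedAddMonoid β] [SMul 𝕜 E] [Module 𝕜 β]
    {s : Set E} (hs : Convex 𝕜 s) {t : Finset ι} {f : ι → E → β}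
    (hf : ∀ i ∈ t, ConcaveOn 𝕜 s (f i)) : ConcaveOn 𝕜 s fun x => ∑ i ∈ t, f i x := by
  classical
  induction t using Finset.induction_on with
  | empty => simpa using concaveOn_const 0 hs
  | insert i t hi ih =>
    simp only [sum_insert hi]
    exact (hf i (mem_insert_self i t)).add (ih fun j hj => hf j (mem_insert_of_mem hj))

lemma ConcaveOn.comp_isLinearMap {E F : Type*} [AddCommGroup E] [Module ℝ E] [AddCommGroup F]
    [Module ℝ F] {s : Set F} {f : F → ℝ} (hf : ConcaveOn ℝ s f) {L : E → F}
    (hL : IsLinearMap ℝ L) {C : Set E} (hC : Convex ℝ C) (hLC : Set.MapsTo L C s) :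
    ConcaveOn ℝ C (f ∘ L) :=
  (hf.comp_linearMap (hL.mk' L)).subset hLC hC

lemma concaveOn_logb_one_add {b : ℝ} (hb : 1 < b) :
    ConcaveOn ℝ (Set.Ici 0) fun x => Real.logb b (1 + x) := by
  have hlog := (strictConcaveOn_log_Ioi.concaveOn.translate_right 1).subset
    (fun x (hx : 0 ≤ x) => show (0 : ℝ) < 1 + x by linarith) (convex_Ici 0)
  refine (hlog.smul (inv_nonneg.2 (Real.log_pos hb).le)).congr fun x _ => ?_
  simp [Real.logb, div_eq_inv_mul]

lemma monotoneOn_logb_one_add {b : ℝ} (hb : 1 < b) :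
    MonotoneOn (fun x => Real.logb b (1 + x)) (Set.Ici 0) := fun x (hx : 0 ≤ x) _ _ hxy =>
  Real.logb_le_logb_of_le hb (by linarith) (by linarith)

noncomputable def perspective (F : ℝ → ℝ) (z : ℝ × ℝ) : ℝ :=
  if 0 < z.1 then z.1 * F (z.2 / z.1) else 0

lemma perspective_eq_mul {F : ℝ → ℝ} {t u : ℝ} (ht : 0 ≤ t) :
    perspective F (t, u) = t * F (u / t) := by
  rcases ht.eq_or_lt with rfl | ht
  · simp [perspective]
  · exact if_pos ht

theorem concaveOn_perspective {F : ℝ → ℝ} (hF : ConcaveOn ℝ (Set.Ici 0) F)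
    (hFm : MonotoneOn F (Set.Ici 0)) :
    ConcaveOn ℝ (Set.Ici 0 ×ˢ Set.Ici 0) (perspective F) := by
  refine ⟨(convex_Ici 0).prod (convex_Ici 0), ?_⟩
  rintro ⟨t₁, u₁⟩ ⟨ht₁, hu₁⟩ ⟨t₂, u₂⟩ ⟨ht₂, hu₂⟩ a b ha hb hab
  simp only [Set.mem_Ici] at ht₁ hu₁ ht₂ hu₂
  simp only [Prod.smul_mk, Prod.mk_add_mk, smul_eq_mul]
  set t := a * t₁ + b * t₂
  have hat₁ : 0 ≤ a * t₁ := mul_nonneg ha ht₁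
  have hbt₂ : 0 ≤ b * t₂ := mul_nonneg hb ht₂
  rw [perspective_eq_mul ht₁, perspective_eq_mul ht₂, perspective_eq_mul (by positivity),
    ← mul_assoc, ← mul_assoc]
  rcases (show 0 ≤ t by positivity).eq_or_lt with ht | ht
  · rw [← ht, show a * t₁ = 0 by linarith, show b * t₂ = 0 by linarith]
    simp
  -- with weights `a tᵢ / t` this is concavity of `F` at the slopes `uᵢ / tᵢ`; a slope with
  -- `tᵢ = 0` gets weight `0` and only its contribution `a uᵢ ≥ 0` is lost, which `hFm` absorbs
  have hw : a * t₁ / t + b * t₂ / t = 1 := by rw [← add_div, div_self ht.ne']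
  have hslope : ∀ {c t' u' : ℝ}, 0 ≤ c → 0 ≤ t' → 0 ≤ u' →
      c * t' / t * (u' / t') ≤ c * u' / t := by
    intro c t' u' hc ht' hu'
    rcases ht'.eq_or_lt with rfl | ht'
    · simp only [mul_zero, zero_div, zero_mul]
      positivity
    · exact (by field_simp : c * t' / t * (u' / t') = c * u' / t).le
  calc a * t₁ * F (u₁ / t₁) + b * t₂ * F (u₂ / t₂)
      = t * (a * t₁ / t * F (u₁ / t₁) + b * t₂ / t * F (u₂ / t₂)) := by
        field_simp
    _ ≤ t * F (a * t₁ / t * (u₁ / t₁) + b * t₂ / t * (u₂ / t₂)) := by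
        gcongr
        exact hF.2 (div_nonneg hu₁ ht₁) (div_nonneg hu₂ ht₂) (div_nonneg hat₁ ht.le)
          (div_nonneg hbt₂ ht.le) hw
    _ ≤ t * F ((a * u₁ + b * u₂) / t) := by
        gcongr
        refine hFm (Set.mem_Ici.2 (by positivity)) (Set.mem_Ici.2 (by positivity)) ?_
        rw [add_div]
        exact add_le_add (hslope ha ht₁ hu₁) (hslope hb ht₂ hu₂)

lemma concaveOn_sum_mul_perspective {E Ω : Type*} [AddCommGroup E] [Module ℝ E] [Fintype Ω]
    {C : Set E} (hC : Convex ℝ C) {F : ℝ → ℝ} (hF : ConcaveOn ℝ (Set.Ici 0) F)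
    (hFm : MonotoneOn F (Set.Ici 0)) {q : Ω → ℝ} (hq : ∀ ω, 0 ≤ q ω) {t u : Ω → E → ℝ}
    (hlin : ∀ ω, IsLinearMap ℝ fun x => (t ω x, u ω x))
    (hnonneg : ∀ x ∈ C, ∀ ω, 0 ≤ t ω x ∧ 0 ≤ u ω x) :
    ConcaveOn ℝ C fun x => ∑ ω, q ω * perspective F (t ω x, u ω x) :=
  ConcaveOn.sum hC fun ω _ => ((concaveOn_perspective hF hFm).comp_isLinearMap (hlin ω) hC
    fun x hx => hnonneg x hx ω).smul (hq ω)

lemma convex_allocationSet {Ω σ κ : Type*} (I : Finset σ) (J : Finset κ) (T : ℝ) :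
    Convex ℝ {te : (Ω → σ → κ → ℝ) × (Ω → σ → κ → ℝ) | (∀ ω S l, 0 ≤ te.1 ω S l) ∧
      (∀ ω, ∑ S ∈ I, ∑ l ∈ J, te.1 ω S l ≤ T) ∧ (∀ ω S l, 0 ≤ te.2 ω S l)} := by
  rintro x ⟨hx₁, hxT, hx₂⟩ y ⟨hy₁, hyT, hy₂⟩ a b ha hb hab
  refine ⟨fun ω S l => ?_, fun ω => ?_, fun ω S l => ?_⟩ <;>
    simp only [Prod.fst_add, Prod.snd_add, Prod.smul_fst, Prod.smul_snd, Pi.add_apply,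
      Pi.smul_apply, smul_eq_mul]
  · have := hx₁ ω S l
    have := hy₁ ω S l
    positivity
  · simp only [sum_add_distrib, ← mul_sum]
    calc _ ≤ a * T + b * T := add_le_add (mul_le_mul_of_nonneg_left (hxT ω) ha)
          (mul_le_mul_of_nonneg_left (hyT ω) hb)
      _ = T := by rw [← add_mul, hab, one_mul]
  · have := hx₂ ω S l
    have := hy₂ ω S l
    positivity

lemma convexOn_expectedEnergy {Ω σ κ : Type*} [Fintype Ω] (q : Ω → ℝ) (I : Finset σ)
    (J : Finset κ) {C : Set ((Ω → σ → κ → ℝ) × (Ω → σ → κ → ℝ))} (hC : Convex ℝ C) :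
    ConvexOn ℝ C fun te => ∑ ω, q ω * ∑ S ∈ I, ∑ l ∈ J, te.2 ω S l := by
  have hlin : IsLinearMap ℝ fun te : (Ω → σ → κ → ℝ) × (Ω → σ → κ → ℝ) =>
      ∑ ω, q ω * ∑ S ∈ I, ∑ l ∈ J, te.2 ω S l :=
    ⟨fun x y => by simp only [Prod.snd_add, Pi.add_apply, sum_add_distrib, mul_add],
      fun c x => by simp only [Prod.smul_snd, Pi.smul_apply, smul_eq_mul, mul_sum, mul_left_comm]⟩
  exact (hlin.mk' _).convexOn hC

theorem stmt5_general (K L : ℕ)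
    (I : Finset (Finset (Fin K)))
    (n : Finset (Fin K) → ℕ)
    (D : ℕ → ℝ)
    (r : Fin K → ℕ)
    (B T n₀ : ℝ) (hB : 0 < B) (hT : 0 < T) (hn₀ : 0 < n₀)
    (Ω : Type) [Fintype Ω]
    (q : Ω → ℝ) (hq : ∀ ω, 0 ≤ q ω)
    (h : Ω → Fin K → ℝ) (hh : ∀ ω k, 0 < h ω k)
    (φ : ℝ → ℝ → ℝ)
    (hφ : ∀ t u : ℝ, φ t u = if 0 < t then t * Real.logb 2 (1 + u / t) else 0)
    (C : Set ((Ω → Finset (Fin K) → ℕ → ℝ) × (Ω → Finset (Fin K) → ℕ → ℝ)))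
    (hC : C = {te | (∀ ω S l, 0 ≤ te.1 ω S l) ∧
        (∀ ω, ∑ S ∈ I, ∑ l ∈ Finset.Icc 1 L, te.1 ω S l ≤ T) ∧
        (∀ ω S l, 0 ≤ te.2 ω S l)})
    (g : Finset (Fin K) → Fin K →
        ((Ω → Finset (Fin K) → ℕ → ℝ) × (Ω → Finset (Fin K) → ℕ → ℝ)) → ℝ)
    (hg : ∀ S k te, g S k te = (n S : ℝ) * D (r k) -
        (B / T) * ∑ ω, q ω * φ (te.1 ω S (r k)) (te.2 ω S (r k) * h ω k / n₀))
    (Etil : ((Ω → Finset (Fin K) → ℕ → ℝ) × (Ω → Finset (Fin K) → ℕ → ℝ)) → ℝ)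
    (hEtil : ∀ te, Etil te = ∑ ω, q ω * ∑ S ∈ I, ∑ l ∈ Finset.Icc 1 L, te.2 ω S l)
    (Dual : (Finset (Fin K) → Fin K → ℝ) → ℝ)
    (hDual : ∀ lam : Finset (Fin K) → Fin K → ℝ,
      Dual lam = sInf ((fun te => Etil te + ∑ S ∈ I, ∑ k ∈ S, lam S k * g S k te) '' C))
    (slater : ∃ te ∈ C, ∀ S ∈ I, ∀ k ∈ S, g S k te < 0) :
    sSup {d : ℝ | ∃ lam : Finset (Fin K) → Fin K → ℝ,
        (∀ S ∈ I, ∀ k ∈ S, 0 ≤ lam S k) ∧ d = Dual lam} =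
    sInf {v : ℝ | ∃ te ∈ C, (∀ S ∈ I, ∀ k ∈ S, g S k te ≤ 0) ∧ v = Etil te} := by
  have hCconv : Convex ℝ C := hC ▸ convex_allocationSet I (Icc 1 L) T
  have hC₀ : ∀ te ∈ C, ∀ ω S l, 0 ≤ te.1 ω S l ∧ 0 ≤ te.2 ω S l := by
    rw [hC]
    exact fun te hte ω S l => ⟨hte.1 ω S l, hte.2.2 ω S l⟩
  have hEconv : ConvexOn ℝ C Etil :=
    (convexOn_expectedEnergy q I (Icc 1 L) hCconv).congr fun te _ => (hEtil te).symm
  have hE₀ : ∀ te ∈ C, 0 ≤ Etil te := fun te hte => by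
    rw [hEtil]
    exact sum_nonneg fun ω _ => mul_nonneg (hq ω)
      (sum_nonneg fun S _ => sum_nonneg fun l _ => (hC₀ te hte ω S l).2)
  have hgconv : ∀ S k, ConvexOn ℝ C (g S k) := fun S k => by
    have hrate := concaveOn_sum_mul_perspective hCconv (concaveOn_logb_one_add one_lt_two)
      (monotoneOn_logb_one_add one_lt_two) hq (t := fun ω te => te.1 ω S (r k))
      (u := fun ω te => te.2 ω S (r k) * h ω k / n₀)
      (fun ω => ⟨fun x y => by ext <;> simp [add_mul, add_div],
        fun c x => by ext <;> simp [mul_assoc, mul_div_assoc]⟩)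
      (fun te hte ω => ⟨(hC₀ te hte ω S (r k)).1,
        div_nonneg (mul_nonneg (hC₀ te hte ω S (r k)).2 (hh ω k).le) hn₀.le⟩)
    refine ((convexOn_const ((n S : ℝ) * D (r k)) hCconv).sub
      (hrate.smul (div_pos hB hT).le)).congr fun te _ => ?_
    simp [hg, hφ, perspective]
  simp only [hDual]
  exact sSup_lagrangeDual_eq_sInf_primal_sigma I (fun S => S) hCconv hEconv
    (fun S _ k _ => hgconv S k) hE₀ slater

/-- zero duality gap under Slater's condition: with `C` the set of
time/energy allocations satisfying the separable constraints, `g S k` the relaxed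
successful-transmission constraint functions, `Ẽ` the average energy objective, and
`D λ` the partial Lagrange dual function, if Slater's condition holds then
`sup {D λ : λ ≥ 0} = inf {Ẽ(t,e) : (t,e) ∈ C, g ≤ 0}`. -/
theorem stmt5 (K L : ℕ) (hK : 0 < K) (hL : 0 < L)
    (I : Finset (Finset (Fin K))) (hI : I.Nonempty) (hIne : ∀ S ∈ I, S.Nonempty)
    (n : Finset (Fin K) → ℕ) (hn : ∀ S ∈ I, 0 < n S)
    (D : ℕ → ℝ) (hD1 : 0 < D 1)
    (hD : ∀ l m : ℕ, 1 ≤ l → l < m → m ≤ L → D l < D m)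
    (r : Fin K → ℕ) (hr : ∀ k, r k ∈ Finset.Icc 1 L)
    (B T n₀ : ℝ) (hB : 0 < B) (hT : 0 < T) (hn₀ : 0 < n₀)
    (Ω : Type) [Fintype Ω] [Nonempty Ω]
    (q : Ω → ℝ) (hq : ∀ ω, 0 ≤ q ω) (hq1 : ∑ ω, q ω = 1)
    (h : Ω → Fin K → ℝ) (hh : ∀ ω k, 0 < h ω k)
    (φ : ℝ → ℝ → ℝ)
    (hφ : ∀ t u : ℝ, φ t u = if 0 < t then t * Real.logb 2 (1 + u / t) else 0)
    (C : Set ((Ω → Finset (Fin K) → ℕ → ℝ) × (Ω → Finset (Fin K) → ℕ → ℝ)))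
    (hC : C = {te | (∀ ω S l, 0 ≤ te.1 ω S l) ∧
        (∀ ω, ∑ S ∈ I, ∑ l ∈ Finset.Icc 1 L, te.1 ω S l ≤ T) ∧
        (∀ ω S l, 0 ≤ te.2 ω S l)})
    (g : Finset (Fin K) → Fin K →
        ((Ω → Finset (Fin K) → ℕ → ℝ) × (Ω → Finset (Fin K) → ℕ → ℝ)) → ℝ)
    (hg : ∀ S k te, g S k te = (n S : ℝ) * D (r k) -
        (B / T) * ∑ ω, q ω * φ (te.1 ω S (r k)) (te.2 ω S (r k) * h ω k / n₀))
    (Etil : ((Ω → Finset (Fin K) → ℕ → ℝ) × (Ω → Finset (Fin K) → ℕ → ℝ)) → ℝ)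
    (hEtil : ∀ te, Etil te = ∑ ω, q ω * ∑ S ∈ I, ∑ l ∈ Finset.Icc 1 L, te.2 ω S l)
    (Dual : (Finset (Fin K) → Fin K → ℝ) → ℝ)
    (hDual : ∀ lam : Finset (Fin K) → Fin K → ℝ,
      Dual lam = sInf ((fun te => Etil te + ∑ S ∈ I, ∑ k ∈ S, lam S k * g S k te) '' C))
    (slater : ∃ te ∈ C, ∀ S ∈ I, ∀ k ∈ S, g S k te < 0) :
    sSup {d : ℝ | ∃ lam : Finset (Fin K) → Fin K → ℝ,
        (∀ S ∈ I, ∀ k ∈ S, 0 ≤ lam S k) ∧ d = Dual lam} =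
    sInf {v : ℝ | ∃ te ∈ C, (∀ S ∈ I, ∀ k ∈ S, g S k te ≤ 0) ∧ v = Etil te} :=
  stmt5_general K L I n D r B T n₀ hB hT hn₀ Ω q hq h hh φ hφ C hC g hg Etil hEtil Dual hDual slater
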